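/- arXiv:2104.10911 — 2 statements merged into one kernel-verified Lean document; each statement's English description precedes it below -/
import Mathlib

section
/- Let f : ℝⁿ → ℝ be a convex differentiable function, h : ℝᵐ → ℝ a closed convex function, A ∈ ℝ^{m×n}, ν > 0, and λ ∈ ℝᵐ. Define φ₁(x) := f(x) + min_{y∈ℝᵐ} { h(y) + ⟨λ, Ax − y⟩ + (ν/2)‖Ax − y‖² }. Then φ₁ is differentiable on ℝⁿ and its gradient satisfies ∇φ₁(x) = ∇f(x) + Aᵀ prox_{νh*}(νAx + λ) for every x ∈ ℝⁿ. -/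
/-!
Write `ψ(v) = min_y h(y) + ⟪λ, v - y⟫ + ν/2 ‖v - y‖²`, so that `φ₁ = f + ψ ∘ A`. Since `h` has an
affine minorant, the objective is coercive and has a minimiser `y₀` for the given `v`; its
first-order condition says that `u = λ + ν (v - y₀)` is a subgradient of `h` at `y₀`. That
subgradient inequality gives `ψ(v) + ⟪u, w - v⟫ ≤ ψ(w)`, and evaluating the objective at `y₀` gives
`ψ(w) ≤ ψ(v) + ⟪u, w - v⟫ + ν/2 ‖w - v‖²`, so `∇ψ(v) = u`. Finally Fenchel–Young holds with
equality at the pair `(y₀, u)`, which makes `u` the proximal point of `ν h*` at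
`u + ν y₀ = ν v + λ`. The chain rule through `A` finishes the proof.
-/

open scoped RealInnerProductSpace Matrix

open Set Filter Topology

section Gradient

variable {E F : Type*} [NormedAddCommGroup E] [InnerProductSpace ℝ E]
  [NormedAddCommGroup F] [InnerProductSpace ℝ F]

lemma HasGradientAt.add [CompleteSpace E] {f g : E → ℝ} {f' g' x : E}
    (hf : HasGradientAt f f' x) (hg : HasGradientAt g g' x) :
    HasGradientAt (fun y => f y + g y) (f' + g') x := by
  rw [hasGradientAt_iff_hasFDerivAt, map_add]
  exact hf.hasFDerivAt.add hg.hasFDerivAt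

lemma HasGradientAt.comp_linearMap [FiniteDimensional ℝ E] [FiniteDimensional ℝ F]
    {g : F → ℝ} {g' : F} (T : E →ₗ[ℝ] F) {x : E} (hg : HasGradientAt g g' (T x)) :
    HasGradientAt (g ∘ T) (LinearMap.adjoint T g') x := by
  rw [hasGradientAt_iff_hasFDerivAt] at hg ⊢
  refine (hg.comp x (LinearMap.toContinuousLinearMap T).hasFDerivAt).congr_fderiv ?_
  ext d
  simp [LinearMap.adjoint_inner_left]

lemma hasGradientAt_of_abs_sub_le_sq [CompleteSpace E] {φ : E → ℝ} {g v : E} (C : ℝ)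
    (hC : ∀ w, |φ w - φ v - ⟪g, w - v⟫| ≤ C * ‖w - v‖ ^ 2) : HasGradientAt φ g v := by
  rw [hasGradientAt_iff_isLittleO]
  have hsq : (fun w => ‖w - v‖ ^ 2) =o[𝓝 v] fun w => w - v :=
    (Asymptotics.isLittleO_norm_pow_id one_lt_two).comp_tendsto
      (tendsto_sub_nhds_zero_iff.2 tendsto_id)
  refine (Asymptotics.IsBigO.of_bound C (Eventually.of_forall fun w => ?_)).trans_isLittleO hsq
  simpa [Real.norm_eq_abs] using hC w

end Gradient

section Conjugate

variable {E : Type*} [NormedAddCommGroup E] [InnerProductSpace ℝ E]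

def HasSubgradientAt (h : E → ℝ) (u y₀ : E) : Prop :=
  ∀ y, h y₀ + ⟪u, y - y₀⟫ ≤ h y

noncomputable def fenchelConj (h : E → ℝ) (v : E) : EReal :=
  ⨆ u, ((⟪u, v⟫ - h u : ℝ) : EReal)

lemma le_fenchelConj (h : E → ℝ) (y v : E) : ((⟪y, v⟫ - h y : ℝ) : EReal) ≤ fenchelConj h v :=
  le_iSup (fun u => ((⟪u, v⟫ - h u : ℝ) : EReal)) y

lemma HasSubgradientAt.fenchelConj_le {h : E → ℝ} {u y₀ : E} (hu : HasSubgradientAt h u y₀) :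
    fenchelConj h u ≤ ((⟪y₀, u⟫ - h y₀ : ℝ) : EReal) := by
  refine iSup_le fun y => EReal.coe_le_coe_iff.2 ?_
  have hy := hu y
  rw [inner_sub_right] at hy
  rw [real_inner_comm u y, real_inner_comm u y₀]
  linarith

/-- Fenchel–Young at `y₀` bounds `h*(p)` below and, as `u ∈ ∂h(y₀)`, is an equality at `u`; the
prox inequality at `u + ν y₀` then collapses to `‖p - u‖² ≤ 0`. -/
lemma HasSubgradientAt.eq_of_prox_fenchelConj_le {h : E → ℝ} {u y₀ p : E} {ν : ℝ}
    (hu : HasSubgradientAt h u y₀) (hν : 0 ≤ ν)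
    (hp : (ν : EReal) * fenchelConj h p + ((1 / 2 * ‖u + ν • y₀ - p‖ ^ 2 : ℝ) : EReal)
        ≤ (ν : EReal) * fenchelConj h u + ((1 / 2 * ‖u + ν • y₀ - u‖ ^ 2 : ℝ) : EReal)) :
    p = u := by
  have hν' : (0 : EReal) ≤ ν := EReal.coe_nonneg.2 hν
  have hlow := add_le_add_left (mul_le_mul_of_nonneg_left (le_fenchelConj h y₀ p) hν')
    ((1 / 2 * ‖u + ν • y₀ - p‖ ^ 2 : ℝ) : EReal)
  have hup := add_le_add_left (mul_le_mul_of_nonneg_left hu.fenchelConj_le hν')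
    ((1 / 2 * ‖u + ν • y₀ - u‖ ^ 2 : ℝ) : EReal)
  have hreal : ν * (⟪y₀, p⟫ - h y₀) + 1 / 2 * ‖u + ν • y₀ - p‖ ^ 2
      ≤ ν * (⟪y₀, u⟫ - h y₀) + 1 / 2 * ‖u + ν • y₀ - u‖ ^ 2 := by
    exact_mod_cast (hlow.trans hp).trans hup
  have hsplit : u + ν • y₀ - p = (u - p) + ν • y₀ := by abel
  rw [hsplit, add_sub_cancel_left, norm_add_sq_real, real_inner_smul_right, inner_sub_left,
    real_inner_comm y₀ u, real_inner_comm y₀ p] at hreal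
  have hpu : ‖u - p‖ ^ 2 ≤ 0 := by linarith
  rw [← sub_eq_zero, ← norm_eq_zero, norm_sub_rev]
  exact pow_eq_zero_iff two_ne_zero |>.1 (le_antisymm hpu (sq_nonneg _))

end Conjugate

section Envelope

variable {E : Type*} [NormedAddCommGroup E] [InnerProductSpace ℝ E]
  {h : E → ℝ} {lam : E} {ν : ℝ}

noncomputable def augmentedPenalty (h : E → ℝ) (lam : E) (ν : ℝ) (v y : E) : ℝ :=
  h y + ⟪lam, v - y⟫ + ν / 2 * ‖v - y‖ ^ 2

noncomputable def augmentedEnvelope (h : E → ℝ) (lam : E) (ν : ℝ) (v : E) : ℝ :=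
  ⨅ y, augmentedPenalty h lam ν v y

lemma ConvexOn.exists_continuousLinearMap_add_const_le [FiniteDimensional ℝ E]
    (hh : ConvexOn ℝ univ h) : ∃ (l : StrongDual ℝ E) (c : ℝ), ∀ y, l y + c ≤ h y := by
  obtain ⟨l, c, hle, -⟩ := hh.exists_affine_le_of_lt (𝕜 := ℝ) (mem_univ 0) (sub_one_lt (h 0))
    isClosed_univ (hh.locallyLipschitz.continuous.lowerSemicontinuous.lowerSemicontinuousOn univ)
  exact ⟨l, c, fun y => by simpa using hle ⟨y, mem_univ y⟩⟩

lemma ConvexOn.exists_forall_augmentedPenalty_le [FiniteDimensional ℝ E]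
    (hh : ConvexOn ℝ univ h) (hν : 0 < ν) (lam v : E) :
    ∃ y₀, ∀ y, augmentedPenalty h lam ν v y₀ ≤ augmentedPenalty h lam ν v y := by
  obtain ⟨l, c, hlc⟩ := hh.exists_continuousLinearMap_add_const_le
  set K := ‖l‖ + ‖lam‖
  have hlower : ∀ y,
      l v + c + dist v y * (ν / 2 * dist v y - K) ≤ augmentedPenalty h lam ν v y := by
    intro y
    have hl : l v - l y ≤ ‖l‖ * ‖v - y‖ := by
      rw [← map_sub]; exact (Real.le_norm_self _).trans (l.le_opNorm _)
    have hlam : -(‖lam‖ * ‖v - y‖) ≤ ⟪lam, v - y⟫ :=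
      neg_le_of_abs_le (abs_real_inner_le_norm _ _)
    rw [dist_eq_norm, augmentedPenalty]
    linarith [hlc y]
  have hcont : Continuous (augmentedPenalty h lam ν v) := by
    have hhc := hh.locallyLipschitz.continuous
    unfold augmentedPenalty; fun_prop
  have hdist := tendsto_dist_left_cocompact_atTop v
  refine hcont.exists_forall_le (tendsto_atTop_mono hlower (tendsto_atTop_add_const_left _ _ ?_))
  exact hdist.atTop_mul_atTop₀
    (tendsto_atTop_add_const_right _ _ (hdist.const_mul_atTop (by positivity)))

lemma ConvexOn.hasSubgradientAt_of_forall_augmentedPenalty_le (hh : ConvexOn ℝ univ h) {v y₀ : E}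
    (hmin : ∀ y, augmentedPenalty h lam ν v y₀ ≤ augmentedPenalty h lam ν v y) :
    HasSubgradientAt h (lam + ν • (v - y₀)) y₀ := by
  intro y
  set d := y - y₀
  have hsmall : ∀ t ∈ Ioc (0 : ℝ) 1,
      h y₀ + ⟪lam + ν • (v - y₀), d⟫ ≤ h y + t * (ν / 2 * ‖d‖ ^ 2) := by
    rintro t ⟨ht0, ht1⟩
    have hconv : h (y₀ + t • d) ≤ (1 - t) * h y₀ + t * h y := by
      have hcvx := hh.2 (mem_univ y₀) (mem_univ y) (sub_nonneg.2 ht1) ht0.le (sub_add_cancel 1 t)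
      rwa [show (1 - t) • y₀ + t • y = y₀ + t • d by module, smul_eq_mul, smul_eq_mul] at hcvx
    have hinner : ⟪lam, v - y₀ - t • d⟫ = ⟪lam, v - y₀⟫ - t * ⟪lam, d⟫ := by
      rw [inner_sub_right, real_inner_smul_right]
    have hnorm : ‖v - y₀ - t • d‖ ^ 2 = ‖v - y₀‖ ^ 2 - 2 * (t * ⟪v - y₀, d⟫) + t ^ 2 * ‖d‖ ^ 2 := by
      rw [norm_sub_sq_real, real_inner_smul_right, norm_smul, mul_pow, Real.norm_eq_abs, sq_abs]
    have hstep := hmin (y₀ + t • d)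
    rw [augmentedPenalty, augmentedPenalty, show v - (y₀ + t • d) = v - y₀ - t • d by abel,
      hinner, hnorm] at hstep
    rw [inner_add_left, real_inner_smul_left]
    have hscaled :
        t * (h y₀ + (⟪lam, d⟫ + ν * ⟪v - y₀, d⟫)) ≤ t * (h y + t * (ν / 2 * ‖d‖ ^ 2)) := by
      linarith
    exact le_of_mul_le_mul_left hscaled ht0
  have hlim : Tendsto (fun t : ℝ => h y + t * (ν / 2 * ‖d‖ ^ 2)) (𝓝[>] 0) (𝓝 (h y)) := by
    have hc : Continuous fun t : ℝ => h y + t * (ν / 2 * ‖d‖ ^ 2) := by fun_prop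
    simpa using (hc.tendsto 0).mono_left nhdsWithin_le_nhds
  exact ge_of_tendsto hlim (eventually_of_mem (Ioc_mem_nhdsGT one_pos) hsmall)

lemma augmentedPenalty_eq_add (v w y₀ : E) :
    augmentedPenalty h lam ν w y₀ = augmentedPenalty h lam ν v y₀
      + ⟪lam + ν • (v - y₀), w - v⟫ + ν / 2 * ‖w - v‖ ^ 2 := by
  rw [augmentedPenalty, augmentedPenalty, show w - y₀ = (w - v) + (v - y₀) by abel,
    inner_add_right, norm_add_sq_real, inner_add_left, real_inner_smul_left,
    real_inner_comm (v - y₀) (w - v)]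
  ring

lemma HasSubgradientAt.augmentedPenalty_add_inner_le {v y₀ : E}
    (hsub : HasSubgradientAt h (lam + ν • (v - y₀)) y₀) (hν : 0 ≤ ν) (w y : E) :
    augmentedPenalty h lam ν v y₀ + ⟪lam + ν • (v - y₀), w - v⟫ ≤ augmentedPenalty h lam ν w y := by
  set u := lam + ν • (v - y₀)
  have hsplit : ⟪u, w - v⟫ = ⟪u, w - y⟫ + ⟪u, y - y₀⟫ - ⟪u, v - y₀⟫ := by
    rw [← inner_add_right, ← inner_sub_right]; congr 1; abel
  have hwy : ⟪u, w - y⟫ = ⟪lam, w - y⟫ + ν * ⟪w - y, v - y₀⟫ := by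
    rw [inner_add_left, real_inner_smul_left, real_inner_comm (v - y₀) (w - y)]
  have hvy : ⟪u, v - y₀⟫ = ⟪lam, v - y₀⟫ + ν * ‖v - y₀‖ ^ 2 := by
    rw [inner_add_left, real_inner_smul_left, real_inner_self_eq_norm_sq]
  have hsq : 0 ≤ ν / 2 * ‖(w - y) - (v - y₀)‖ ^ 2 := by positivity
  rw [norm_sub_sq_real] at hsq
  rw [augmentedPenalty, augmentedPenalty]
  linarith [hsub y]

lemma HasSubgradientAt.abs_augmentedEnvelope_sub_le {v y₀ : E}
    (hsub : HasSubgradientAt h (lam + ν • (v - y₀)) y₀) (hν : 0 ≤ ν) (w : E) :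
    |augmentedEnvelope h lam ν w - augmentedEnvelope h lam ν v - ⟪lam + ν • (v - y₀), w - v⟫|
      ≤ ν / 2 * ‖w - v‖ ^ 2 := by
  have hbdd : ∀ w, BddBelow (range (augmentedPenalty h lam ν w)) := fun w =>
    ⟨_, forall_mem_range.2 (hsub.augmentedPenalty_add_inner_le hν w)⟩
  have henv_v : augmentedEnvelope h lam ν v = augmentedPenalty h lam ν v y₀ := by
    refine le_antisymm (ciInf_le (hbdd v) y₀) (le_ciInf fun y => ?_)
    simpa using hsub.augmentedPenalty_add_inner_le hν v y
  have hlow : augmentedPenalty h lam ν v y₀ + ⟪lam + ν • (v - y₀), w - v⟫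
      ≤ augmentedEnvelope h lam ν w :=
    le_ciInf (hsub.augmentedPenalty_add_inner_le hν w)
  have hup : augmentedEnvelope h lam ν w ≤ augmentedPenalty h lam ν w y₀ := ciInf_le (hbdd w) y₀
  rw [augmentedPenalty_eq_add v] at hup
  rw [abs_le, henv_v]
  constructor <;> linarith [sq_nonneg ‖w - v‖]

theorem ConvexOn.hasGradientAt_augmentedEnvelope [FiniteDimensional ℝ E]
    (hh : ConvexOn ℝ univ h) (hν : 0 < ν) {v p : E}
    (hp : ∀ u, (ν : EReal) * fenchelConj h p + ((1 / 2 * ‖ν • v + lam - p‖ ^ 2 : ℝ) : EReal)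
        ≤ (ν : EReal) * fenchelConj h u + ((1 / 2 * ‖ν • v + lam - u‖ ^ 2 : ℝ) : EReal)) :
    HasGradientAt (augmentedEnvelope h lam ν) p v := by
  obtain ⟨y₀, hmin⟩ := hh.exists_forall_augmentedPenalty_le hν lam v
  have hsub := hh.hasSubgradientAt_of_forall_augmentedPenalty_le hmin
  have hz : lam + ν • (v - y₀) + ν • y₀ = ν • v + lam := by module
  obtain rfl : p = lam + ν • (v - y₀) :=
    hsub.eq_of_prox_fenchelConj_le hν.le (by rw [hz]; exact hp _)
  exact hasGradientAt_of_abs_sub_le_sq _ (hsub.abs_augmentedEnvelope_sub_le hν.le)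

end Envelope

theorem statement0_general {n m : ℕ}
    (f : EuclideanSpace ℝ (Fin n) → ℝ)
    (f' : EuclideanSpace ℝ (Fin n) → EuclideanSpace ℝ (Fin n))
    (hfdiff : ∀ x, HasGradientAt f (f' x) x)
    (h : EuclideanSpace ℝ (Fin m) → ℝ)
    (hhconv : ConvexOn ℝ Set.univ h)
    (A : Matrix (Fin m) (Fin n) ℝ)
    (ν : ℝ) (hν : 0 < ν)
    (lam : EuclideanSpace ℝ (Fin m))
    -- `hstar` is the Fenchel conjugate of `h`
    (hstar : EuclideanSpace ℝ (Fin m) → EReal)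
    (hhstar : ∀ v, hstar v = ⨆ u : EuclideanSpace ℝ (Fin m), ((⟪u, v⟫ - h u : ℝ) : EReal))
    -- `P` is the proximal map of `ν · h*`
    (P : EuclideanSpace ℝ (Fin m) → EuclideanSpace ℝ (Fin m))
    (hP : ∀ z u, (ν : EReal) * hstar (P z) + ((1 / 2 * ‖z - P z‖ ^ 2 : ℝ) : EReal)
        ≤ (ν : EReal) * hstar u + ((1 / 2 * ‖z - u‖ ^ 2 : ℝ) : EReal))
    -- `φ` is the function `φ₁`
    (φ : EuclideanSpace ℝ (Fin n) → ℝ)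
    (hφ : ∀ x, φ x = f x + ⨅ y : EuclideanSpace ℝ (Fin m),
        (h y + ⟪lam, Matrix.toEuclideanLin A x - y⟫
          + ν / 2 * ‖Matrix.toEuclideanLin A x - y‖ ^ 2)) :
    ∀ x, HasGradientAt φ
      (f' x + Matrix.toEuclideanLin Aᵀ (P (ν • Matrix.toEuclideanLin A x + lam))) x := by
  obtain rfl : hstar = fenchelConj h := funext hhstar
  obtain rfl : φ = fun x => f x + augmentedEnvelope h lam ν (Matrix.toEuclideanLin A x) :=
    funext hφ
  intro x
  have henv := hhconv.hasGradientAt_augmentedEnvelope hν (hP (ν • Matrix.toEuclideanLin A x + lam))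
  rw [← Matrix.conjTranspose_eq_transpose_of_trivial,
    Matrix.toEuclideanLin_conjTranspose_eq_adjoint]
  exact (hfdiff x).add (henv.comp_linearMap _)

/-- Let `f : ℝⁿ → ℝ` be a convex differentiable function (with gradient `f'`),
`h : ℝᵐ → ℝ` a closed convex function, `A ∈ ℝ^{m×n}`, `ν > 0`, `lam ∈ ℝᵐ`.
Define `φ₁(x) := f(x) + min_y { h(y) + ⟨lam, Ax − y⟩ + (ν/2)‖Ax − y‖² }`.
Then `φ₁` is differentiable and `∇φ₁(x) = ∇f(x) + Aᵀ prox_{νh*}(νAx + lam)`.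
Here `h* : ℝᵐ → ℝ ∪ {+∞}` is the Fenchel conjugate (valued in `EReal`), and
`P z = prox_{νh*}(z)` is encoded as the minimizer of `u ↦ ν·h*(u) + ½‖z − u‖²`. -/
theorem statement0 {n m : ℕ}
    (f : EuclideanSpace ℝ (Fin n) → ℝ)
    (f' : EuclideanSpace ℝ (Fin n) → EuclideanSpace ℝ (Fin n))
    (hfconv : ConvexOn ℝ Set.univ f)
    (hfdiff : ∀ x, HasGradientAt f (f' x) x)
    (h : EuclideanSpace ℝ (Fin m) → ℝ)
    (hhconv : ConvexOn ℝ Set.univ h)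
    (hhclosed : ∀ α : ℝ, IsClosed {y | h y ≤ α})
    (A : Matrix (Fin m) (Fin n) ℝ)
    (ν : ℝ) (hν : 0 < ν)
    (lam : EuclideanSpace ℝ (Fin m))
    -- `hstar` is the Fenchel conjugate of `h`
    (hstar : EuclideanSpace ℝ (Fin m) → EReal)
    (hhstar : ∀ v, hstar v = ⨆ u : EuclideanSpace ℝ (Fin m), ((⟪u, v⟫ - h u : ℝ) : EReal))
    -- `P` is the proximal map of `ν · h*`
    (P : EuclideanSpace ℝ (Fin m) → EuclideanSpace ℝ (Fin m))
    (hP : ∀ z u, (ν : EReal) * hstar (P z) + ((1 / 2 * ‖z - P z‖ ^ 2 : ℝ) : EReal)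
        ≤ (ν : EReal) * hstar u + ((1 / 2 * ‖z - u‖ ^ 2 : ℝ) : EReal))
    -- `φ` is the function `φ₁`
    (φ : EuclideanSpace ℝ (Fin n) → ℝ)
    (hφ : ∀ x, φ x = f x + ⨅ y : EuclideanSpace ℝ (Fin m),
        (h y + ⟪lam, Matrix.toEuclideanLin A x - y⟫
          + ν / 2 * ‖Matrix.toEuclideanLin A x - y‖ ^ 2)) :
    ∀ x, HasGradientAt φ
      (f' x + Matrix.toEuclideanLin Aᵀ (P (ν • Matrix.toEuclideanLin A x + lam))) x :=
  statement0_general f f' hfdiff h hhconv A ν hν lam hstar hhstar P hP φ hφ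
end

section
/- Let f : ℝⁿ → ℝ be convex and differentiable with ∇f Lipschitz continuous with constant L_f > 0, let h : ℝᵐ → ℝ be closed convex, A ∈ ℝ^{m×n}, ν > 0, λ ∈ ℝᵐ, and define φ₁(x) := f(x) + min_{y∈ℝᵐ} { h(y) + ⟨λ, Ax − y⟩ + (ν/2)‖Ax − y‖² }. Then ∇φ₁ is Lipschitz continuous with constant L_f + ν·λ_max(AᵀA), i.e. for all x₁, x₂ ∈ ℝⁿ, ‖∇φ₁(x₁) − ∇φ₁(x₂)‖ ≤ (L_f + ν·λ_max(AᵀA))‖x₁ − x₂‖. -/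
/-!
Write `φ₁ = f + e ∘ A` with `e z = ⨅ y, h y + ⟪λ, z - y⟫ + ν/2 ‖z - y‖²`; the infimum is finite
because a convex `h` on a finite-dimensional space is bounded below by `c - K ‖y‖`. The integrand
is jointly convex in `(z, y)`, so `e` is convex; for fixed `y` it is `ν/2 ‖z‖²` plus an affine
function of `z`, so `ν/2 ‖z‖² - e z` is convex as well. Lipschitz continuity of `∇f` makes
`x ↦ L_f x - ∇f x` monotone, so `L_f/2 ‖x‖² - f` is convex; and `‖A x‖² ≤ λ_max(AᵀA) ‖x‖²`.
Hence, for `L = L_f + ν λ_max(AᵀA)`, both `φ₁` and `L/2 ‖x‖² - φ₁` are convex: `φ₁` lies between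
its tangent planes and the tangent paraboloids of curvature `L`. Comparing the two bounds at the
point `y - t (∇φ₁ y - ∇φ₁ x)` with `t = 1/L` gives the cocoercivity
`(1/L) ‖∇φ₁ x - ∇φ₁ y‖² ≤ ⟪∇φ₁ x - ∇φ₁ y, x - y⟫` (Baillon–Haddad), and Cauchy–Schwarz finishes.
-/

open scoped RealInnerProductSpace Matrix

open Set

section Gradient

variable {E : Type*} [NormedAddCommGroup E] [InnerProductSpace ℝ E]

theorem norm_smul_add_smul_sq {a b : ℝ} (hab : a + b = 1) (u v : E) :
    ‖a • u + b • v‖ ^ 2 = a * ‖u‖ ^ 2 + b * ‖v‖ ^ 2 - a * b * ‖u - v‖ ^ 2 := by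
  simp only [← real_inner_self_eq_norm_sq, inner_add_add_self, inner_sub_sub_self,
    real_inner_smul_left, real_inner_smul_right]
  linear_combination (a * ⟪u, u⟫ + b * ⟪v, v⟫) * hab

variable [CompleteSpace E]

theorem HasGradientAt.sub {f g : E → ℝ} {f' g' x : E} (hf : HasGradientAt f f' x)
    (hg : HasGradientAt g g' x) : HasGradientAt (fun y => f y - g y) (f' - g') x := by
  rw [hasGradientAt_iff_hasFDerivAt, map_sub]
  exact hf.hasFDerivAt.sub hg.hasFDerivAt

theorem hasGradientAt_half_mul_norm_sq (c : ℝ) (x : E) :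
    HasGradientAt (fun y : E => c / 2 * ‖y‖ ^ 2) (c • x) x := by
  rw [hasGradientAt_iff_hasFDerivAt]
  refine ((hasStrictFDerivAt_norm_sq x).hasFDerivAt.const_mul (c / 2)).congr_fderiv ?_
  ext y
  simp [InnerProductSpace.toDual_apply_apply, two_smul]
  ring

theorem HasGradientAt.hasDerivAt_comp_lineMap {ψ : E → ℝ} {ψ' x y : E} {t : ℝ}
    (h : HasGradientAt ψ ψ' (AffineMap.lineMap x y t)) :
    HasDerivAt (ψ ∘ AffineMap.lineMap x y) ⟪ψ', y - x⟫ t := by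
  simpa [InnerProductSpace.toDual_apply_apply] using
    h.hasFDerivAt.comp_hasDerivAt t (AffineMap.hasDerivAt_lineMap (a := x) (b := y) (x := t))

theorem ConvexOn.add_inner_le_of_hasGradientAt {ψ : E → ℝ} {ψ' x : E}
    (hψ : ConvexOn ℝ univ ψ) (hgrad : HasGradientAt ψ ψ' x) (y : E) :
    ψ x + ⟪ψ', y - x⟫ ≤ ψ y := by
  have hline : ConvexOn ℝ univ (ψ ∘ AffineMap.lineMap x y) :=
    hψ.comp_affineMap (AffineMap.lineMap x y)
  have hderiv := hline.le_slope_of_hasDerivAt (mem_univ 0) (mem_univ 1) zero_lt_one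
    (HasGradientAt.hasDerivAt_comp_lineMap (by simpa using hgrad))
  simp only [slope_def_field, Function.comp_apply, AffineMap.lineMap_apply_one,
    AffineMap.lineMap_apply_zero, sub_zero, div_one] at hderiv
  linarith

theorem convexOn_univ_of_monotone_gradient {ψ : E → ℝ} {ψ' : E → E}
    (hgrad : ∀ x, HasGradientAt ψ (ψ' x) x) (hmono : ∀ u v, 0 ≤ ⟪ψ' u - ψ' v, u - v⟫) :
    ConvexOn ℝ univ ψ := by
  refine ⟨convex_univ, fun x _ y _ a b ha hb hab => ?_⟩
  set g := ψ ∘ AffineMap.lineMap (k := ℝ) x y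
  have hg (t : ℝ) : HasDerivAt g ⟪ψ' (AffineMap.lineMap x y t), y - x⟫ t :=
    (hgrad _).hasDerivAt_comp_lineMap
  have hgconv : ConvexOn ℝ univ g := by
    refine Monotone.convexOn_univ_of_deriv (fun t => (hg t).differentiableAt) ?_
    intro s t hst
    have hsub : AffineMap.lineMap x y t - AffineMap.lineMap x y s = (t - s) • (y - x) := by
      simp only [AffineMap.lineMap_apply_module']
      module
    have key := hmono (AffineMap.lineMap x y t) (AffineMap.lineMap x y s)
    rw [hsub, real_inner_smul_right, inner_sub_left] at key
    rw [(hg s).deriv, (hg t).deriv]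
    rcases hst.eq_or_lt with rfl | hlt
    · rfl
    · linarith [nonneg_of_mul_nonneg_right key (sub_pos.2 hlt)]
  obtain rfl : a = 1 - b := by linarith
  simpa [g, AffineMap.lineMap_apply_module] using hgconv.2 (mem_univ 0) (mem_univ 1) ha hb hab

theorem convexOn_univ_half_mul_norm_sq_sub_of_lipschitz_gradient {f : E → ℝ} {f' : E → E} {L : ℝ}
    (hgrad : ∀ x, HasGradientAt f (f' x) x) (hlip : ∀ x y, ‖f' x - f' y‖ ≤ L * ‖x - y‖) :
    ConvexOn ℝ univ (fun x => L / 2 * ‖x‖ ^ 2 - f x) := by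
  refine convexOn_univ_of_monotone_gradient (ψ' := fun x => L • x - f' x)
    (fun x => (hasGradientAt_half_mul_norm_sq L x).sub (hgrad x)) fun u v => ?_
  have hsplit : (L • u - f' u) - (L • v - f' v) = L • (u - v) - (f' u - f' v) := by module
  rw [hsplit, inner_sub_left, real_inner_smul_left, real_inner_self_eq_norm_sq]
  nlinarith [real_inner_le_norm (f' u - f' v) (u - v), hlip u v, norm_nonneg (u - v)]

end Gradient

theorem convexOn_mul_norm_sq_sub_norm_sq_apply {E F : Type*} [NormedAddCommGroup E]
    [InnerProductSpace ℝ E] [NormedAddCommGroup F] [InnerProductSpace ℝ F] {T : E →ₗ[ℝ] F}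
    {μ : ℝ} (hT : ∀ x, ‖T x‖ ^ 2 ≤ μ * ‖x‖ ^ 2) :
    ConvexOn ℝ univ (fun x => μ * ‖x‖ ^ 2 - ‖T x‖ ^ 2) := by
  refine ⟨convex_univ, fun x _ y _ a b ha hb hab => ?_⟩
  have hxy := hT (x - y)
  simp only [smul_eq_mul, map_add, map_smul]
  rw [norm_smul_add_smul_sq hab, norm_smul_add_smul_sq hab, ← map_sub]
  nlinarith [mul_nonneg ha hb]

theorem le_mul_of_forall_mul_sq_le {D r L : ℝ} (hD : 0 ≤ D) (hr : 0 ≤ r) (hLr : 0 ≤ L * r ^ 2)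
    (h : ∀ t, (2 * t - L * t ^ 2) * D ^ 2 ≤ D * r) : D ≤ L * r := by
  rcases hD.eq_or_lt with rfl | hDpos
  · rcases hr.eq_or_lt with rfl | hrpos
    · simp
    · nlinarith
  rcases lt_or_ge 0 L with hL | hL
  · have ht := h L⁻¹
    rw [show 2 * L⁻¹ - L * L⁻¹ ^ 2 = L⁻¹ by field_simp; ring] at ht
    have hinv : L⁻¹ * D ≤ r := le_of_mul_le_mul_left (by linarith) hDpos
    calc D = L * (L⁻¹ * D) := by field_simp
      _ ≤ L * r := mul_le_mul_of_nonneg_left hinv hL.le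
  · have ht := h ((r + 1) / D)
    rw [show (2 * ((r + 1) / D) - L * ((r + 1) / D) ^ 2) * D ^ 2
        = 2 * (r + 1) * D - L * (r + 1) ^ 2 by field_simp] at ht
    nlinarith [mul_nonpos_of_nonpos_of_nonneg hL (sq_nonneg (r + 1))]

section Cocoercive

variable {E : Type*} [NormedAddCommGroup E] [InnerProductSpace ℝ E]
  {φ : E → ℝ} {φ' : E → E} {L : ℝ}

theorem norm_sub_le_of_forall_add_inner_le
    (hlow : ∀ x y, φ x + ⟪φ' x, y - x⟫ ≤ φ y)
    (hup : ∀ x y, φ y ≤ φ x + ⟪φ' x, y - x⟫ + L / 2 * ‖y - x‖ ^ 2) (x y : E) :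
    ‖φ' x - φ' y‖ ≤ L * ‖x - y‖ := by
  have cocoercive (x y : E) (t : ℝ) :
      φ x + ⟪φ' x, y - x⟫ + (t - L / 2 * t ^ 2) * ‖φ' y - φ' x‖ ^ 2 ≤ φ y := by
    set d := φ' y - φ' x
    have h1 := hlow x (y - t • d)
    have h2 := hup y (y - t • d)
    have hd : ⟪φ' y, d⟫ - ⟪φ' x, d⟫ = ‖d‖ ^ 2 := by
      rw [← inner_sub_left, real_inner_self_eq_norm_sq]
    rw [show y - t • d - x = (y - x) - t • d by abel, inner_sub_right,
      real_inner_smul_right] at h1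
    rw [show y - t • d - y = -(t • d) by abel, inner_neg_right, real_inner_smul_right, norm_neg,
      norm_smul, mul_pow, Real.norm_eq_abs, sq_abs] at h2
    linear_combination h1 + h2 - t * hd
  have hsum (t : ℝ) : (2 * t - L * t ^ 2) * ‖φ' x - φ' y‖ ^ 2 ≤ ‖φ' x - φ' y‖ * ‖x - y‖ := by
    have h1 := cocoercive x y t
    have h2 := cocoercive y x t
    have hcs := real_inner_le_norm (φ' x - φ' y) (x - y)
    rw [norm_sub_rev (φ' y)] at h1
    rw [inner_sub_left, inner_sub_right, inner_sub_right] at hcs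
    rw [inner_sub_right] at h1 h2
    linarith
  have hL : 0 ≤ L * ‖x - y‖ ^ 2 := by
    have := (hlow x y).trans (hup x y)
    rw [norm_sub_rev]
    linarith
  exact le_mul_of_forall_mul_sq_le (norm_nonneg _) (norm_nonneg _) hL hsum

theorem ConvexOn.norm_sub_le_of_convexOn_half_mul_norm_sq_sub [CompleteSpace E]
    (hφ : ConvexOn ℝ univ φ) (hψ : ConvexOn ℝ univ (fun x => L / 2 * ‖x‖ ^ 2 - φ x))
    (hgrad : ∀ x, HasGradientAt φ (φ' x) x) (x y : E) :
    ‖φ' x - φ' y‖ ≤ L * ‖x - y‖ := by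
  refine norm_sub_le_of_forall_add_inner_le
    (fun x y => hφ.add_inner_le_of_hasGradientAt (hgrad x) y) (fun x y => ?_) x y
  have := hψ.add_inner_le_of_hasGradientAt ((hasGradientAt_half_mul_norm_sq L x).sub (hgrad x)) y
  rw [inner_sub_left, real_inner_smul_left, inner_sub_right, real_inner_self_eq_norm_sq] at this
  rw [norm_sub_sq_real, real_inner_comm x y]
  linarith

end Cocoercive

theorem le_mul_ciInf_add_mul_ciInf {ι κ : Type*} [Nonempty ι] [Nonempty κ] {u : ι → ℝ}
    {v : κ → ℝ} {a b c : ℝ} (ha : 0 ≤ a) (hb : 0 ≤ b) (h : ∀ i j, c ≤ a * u i + b * v j) :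
    c ≤ a * (⨅ i, u i) + b * ⨅ j, v j := by
  have hu (j : κ) : c - b * v j ≤ a * ⨅ i, u i := by
    rw [Real.mul_iInf_of_nonneg ha]
    exact le_ciInf fun i => by linarith [h i j]
  have hv : c - a * ⨅ i, u i ≤ b * ⨅ j, v j := by
    rw [Real.mul_iInf_of_nonneg hb]
    exact le_ciInf fun j => by linarith [hu j]
  linarith

section AugmentedLagrangian

variable {F : Type*} [NormedAddCommGroup F] [InnerProductSpace ℝ F]

theorem ConvexOn.exists_sub_mul_norm_le [FiniteDimensional ℝ F] {h : F → ℝ}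
    (hh : ConvexOn ℝ univ h) : ∃ c, ∃ K ≥ 0, ∀ y, c - K * ‖y‖ ≤ h y := by
  obtain ⟨δ, hδ, hball⟩ :=
    Metric.continuousAt_iff.1 (hh.locallyLipschitz.continuous.continuousAt (x := 0)) 1 one_pos
  have hnear (y : F) (hy : ‖y‖ < δ) : h 0 - 1 < h y := by
    have := hball (by simpa using hy)
    rw [Real.dist_eq] at this
    linarith [neg_abs_le (h y - h 0)]
  refine ⟨h 0 - 1, 2 / δ, by positivity, fun y => ?_⟩
  have hK : 0 ≤ 2 / δ * ‖y‖ := by positivity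
  rcases lt_or_ge ‖y‖ (δ / 2) with hy | hy
  · linarith [hnear y (by linarith)]
  have hy0 : 0 < ‖y‖ := by linarith
  set t := δ / 2 / ‖y‖
  have ht0 : 0 < t := by positivity
  have ht1 : t ≤ 1 := (div_le_one hy0).2 hy
  have hty : t * ‖y‖ = δ / 2 := div_mul_cancel₀ _ hy0.ne'
  have hconv := hh.2 (mem_univ y) (mem_univ 0) ht0.le (sub_nonneg.2 ht1) (add_sub_cancel t 1)
  have hnear' := hnear (t • y) (by rw [norm_smul, Real.norm_of_nonneg ht0.le]; linarith)
  simp only [smul_zero, add_zero, smul_eq_mul] at hconv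
  have hKy : 2 / δ * ‖y‖ * (δ / 2) = ‖y‖ := by field_simp
  nlinarith

/-- With `z = A x`, this is the augmented Lagrangian of `min f x + h y` subject to `A x = y`,
without its `f x` term. -/
noncomputable def augLagrangian (h : F → ℝ) (lam : F) (ν : ℝ) (z y : F) : ℝ :=
  h y + ⟪lam, z - y⟫ + ν / 2 * ‖z - y‖ ^ 2

noncomputable def augLagrangianValue (h : F → ℝ) (lam : F) (ν : ℝ) (z : F) : ℝ :=
  ⨅ y, augLagrangian h lam ν z y

variable {h : F → ℝ} {lam : F} {ν : ℝ}

theorem augLagrangian_smul_add_smul_le (hh : ConvexOn ℝ univ h) (hν : 0 ≤ ν) {a b : ℝ}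
    (ha : 0 ≤ a) (hb : 0 ≤ b) (hab : a + b = 1) (z₁ z₂ y₁ y₂ : F) :
    augLagrangian h lam ν (a • z₁ + b • z₂) (a • y₁ + b • y₂)
      ≤ a * augLagrangian h lam ν z₁ y₁ + b * augLagrangian h lam ν z₂ y₂ := by
  have hsplit : a • z₁ + b • z₂ - (a • y₁ + b • y₂) = a • (z₁ - y₁) + b • (z₂ - y₂) := by module
  have hconv : h (a • y₁ + b • y₂) ≤ a * h y₁ + b * h y₂ :=
    hh.2 (mem_univ y₁) (mem_univ y₂) ha hb hab
  unfold augLagrangian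
  rw [hsplit, inner_add_right, real_inner_smul_right, real_inner_smul_right,
    norm_smul_add_smul_sq hab]
  nlinarith [mul_nonneg (mul_nonneg hν (mul_nonneg ha hb)) (sq_nonneg ‖z₁ - y₁ - (z₂ - y₂)‖)]

theorem mul_augLagrangian_add_mul_augLagrangian {a b : ℝ} (hab : a + b = 1) (z₁ z₂ y : F) :
    a * augLagrangian h lam ν z₁ y + b * augLagrangian h lam ν z₂ y
      = augLagrangian h lam ν (a • z₁ + b • z₂) y + ν / 2 * (a * b * ‖z₁ - z₂‖ ^ 2) := by
  have hsplit : a • z₁ + b • z₂ - y = a • (z₁ - y) + b • (z₂ - y) := by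
    rw [show a • (z₁ - y) + b • (z₂ - y) = a • z₁ + b • z₂ - (a + b) • y by module, hab,
      one_smul]
  unfold augLagrangian
  rw [hsplit, inner_add_right, real_inner_smul_right, real_inner_smul_right,
    norm_smul_add_smul_sq hab, sub_sub_sub_cancel_right]
  linear_combination (h y) * hab

variable [FiniteDimensional ℝ F]

theorem bddBelow_range_augLagrangian (hh : ConvexOn ℝ univ h) (hν : 0 < ν) (z : F) :
    BddBelow (range (augLagrangian h lam ν z)) := by
  obtain ⟨c, K, hK, hc⟩ := hh.exists_sub_mul_norm_le
  set a := K + ‖lam‖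
  refine ⟨c - K * ‖z‖ - a ^ 2 / (2 * ν), ?_⟩
  rintro _ ⟨y, rfl⟩
  have hlam : -(‖lam‖ * ‖z - y‖) ≤ ⟪lam, z - y⟫ :=
    neg_le_of_neg_le ((neg_le_abs _).trans (abs_real_inner_le_norm lam (z - y)))
  have hy : ‖y‖ ≤ ‖z‖ + ‖z - y‖ := by
    simpa using norm_sub_le z (z - y)
  have hquad : a * ‖z - y‖ ≤ ν / 2 * ‖z - y‖ ^ 2 + a ^ 2 / (2 * ν) := by
    rw [← sub_nonneg, show ν / 2 * ‖z - y‖ ^ 2 + a ^ 2 / (2 * ν) - a * ‖z - y‖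
      = (ν * ‖z - y‖ - a) ^ 2 / (2 * ν) by field_simp; ring]
    positivity
  have := hc y
  unfold augLagrangian
  nlinarith [mul_le_mul_of_nonneg_left hy hK]

theorem convexOn_augLagrangianValue (hh : ConvexOn ℝ univ h) (hν : 0 < ν) :
    ConvexOn ℝ univ (augLagrangianValue h lam ν) := by
  refine ⟨convex_univ, fun z₁ _ z₂ _ a b ha hb hab => ?_⟩
  refine le_mul_ciInf_add_mul_ciInf ha hb fun y₁ y₂ => ?_
  exact (ciInf_le (bddBelow_range_augLagrangian hh hν _) _).trans
    (augLagrangian_smul_add_smul_le hh hν.le ha hb hab z₁ z₂ y₁ y₂)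

theorem convexOn_half_mul_norm_sq_sub_augLagrangianValue (hh : ConvexOn ℝ univ h)
    (hν : 0 < ν) :
    ConvexOn ℝ univ (fun z => ν / 2 * ‖z‖ ^ 2 - augLagrangianValue h lam ν z) := by
  refine ⟨convex_univ, fun z₁ _ z₂ _ a b ha hb hab => ?_⟩
  have key : a * augLagrangianValue h lam ν z₁ + b * augLagrangianValue h lam ν z₂
      - ν / 2 * (a * b * ‖z₁ - z₂‖ ^ 2) ≤ augLagrangianValue h lam ν (a • z₁ + b • z₂) := by
    refine le_ciInf fun y => ?_
    rw [sub_le_iff_le_add, ← mul_augLagrangian_add_mul_augLagrangian hab]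
    gcongr <;> exact ciInf_le (bddBelow_range_augLagrangian hh hν _) y
  simp only [smul_eq_mul]
  rw [norm_smul_add_smul_sq hab]
  linarith

end AugmentedLagrangian

theorem LinearMap.IsSymmetric.inner_apply_self_le {E : Type*} [NormedAddCommGroup E]
    [InnerProductSpace ℝ E] [FiniteDimensional ℝ E] {S : E →ₗ[ℝ] E} (hS : S.IsSymmetric)
    {μ : ℝ} (hμ : ∀ c, Module.End.HasEigenvalue S c → c ≤ μ) (x : E) :
    ⟪S x, x⟫ ≤ μ * ‖x‖ ^ 2 := by
  rcases eq_or_ne x 0 with rfl | hx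
  · simp
  have : Nontrivial E := ⟨⟨x, 0, hx⟩⟩
  have hbdd :
      BddAbove (Set.range fun y : {y : E // y ≠ 0} => RCLike.re ⟪S y, y⟫ / ‖(y : E)‖ ^ 2) :=
    ⟨‖LinearMap.toContinuousLinearMap S‖, by
      rintro _ ⟨y, rfl⟩
      exact (le_abs_self _).trans ((LinearMap.toContinuousLinearMap S).rayleighQuotient_le_norm y)⟩
  have hle := (le_ciSup hbdd ⟨x, hx⟩).trans (hμ _ hS.hasEigenvalue_iSup_of_finiteDimensional)
  rwa [RCLike.re_to_real, div_le_iff₀ (by positivity)] at hle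

theorem Matrix.inner_toEuclideanLin_transpose_mul_self {m n : Type*} [Fintype m] [Fintype n]
    [DecidableEq m] [DecidableEq n] (A : Matrix m n ℝ) (x : EuclideanSpace ℝ n) :
    ⟪Matrix.toEuclideanLin (Aᵀ * A) x, x⟫ = ‖Matrix.toEuclideanLin A x‖ ^ 2 := by
  rw [Matrix.toLpLin_mul_same, LinearMap.comp_apply,
    ← Matrix.conjTranspose_eq_transpose_of_trivial, Matrix.toEuclideanLin_conjTranspose_eq_adjoint,
    LinearMap.adjoint_inner_left, real_inner_self_eq_norm_sq]

theorem Matrix.isSymmetric_toEuclideanLin_transpose_mul_self {m n : Type*} [Fintype m]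
    [Fintype n] [DecidableEq m] [DecidableEq n] (A : Matrix m n ℝ) :
    (Matrix.toEuclideanLin (Aᵀ * A)).IsSymmetric :=
  Matrix.isSymmetric_toEuclideanLin_iff.2 (by simpa using A.isHermitian_conjTranspose_mul_self)

theorem Matrix.norm_toEuclideanLin_sq_le {m n : Type*} [Fintype m] [Fintype n]
    [DecidableEq m] [DecidableEq n] (A : Matrix m n ℝ) {μ : ℝ}
    (hμ : ∀ c, Module.End.HasEigenvalue (Matrix.toEuclideanLin (Aᵀ * A)) c → c ≤ μ)
    (x : EuclideanSpace ℝ n) : ‖Matrix.toEuclideanLin A x‖ ^ 2 ≤ μ * ‖x‖ ^ 2 := by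
  rw [← A.inner_toEuclideanLin_transpose_mul_self]
  exact A.isSymmetric_toEuclideanLin_transpose_mul_self.inner_apply_self_le hμ x

theorem norm_sub_le_of_eq_add_augLagrangianValue {E F : Type*} [NormedAddCommGroup E]
    [InnerProductSpace ℝ E] [CompleteSpace E] [NormedAddCommGroup F] [InnerProductSpace ℝ F]
    [FiniteDimensional ℝ F] {f : E → ℝ} {f' : E → E} (hfconv : ConvexOn ℝ univ f)
    (hf : ∀ x, HasGradientAt f (f' x) x) {Lf : ℝ} (hlip : ∀ x y, ‖f' x - f' y‖ ≤ Lf * ‖x - y‖)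
    {h : F → ℝ} (hh : ConvexOn ℝ univ h) {ν : ℝ} (hν : 0 < ν) {lam : F} {T : E →ₗ[ℝ] F}
    {μ : ℝ} (hT : ∀ x, ‖T x‖ ^ 2 ≤ μ * ‖x‖ ^ 2) {φ : E → ℝ} {φ' : E → E}
    (hφ : ∀ x, φ x = f x + augLagrangianValue h lam ν (T x))
    (hφ' : ∀ x, HasGradientAt φ (φ' x) x) (x y : E) :
    ‖φ' x - φ' y‖ ≤ (Lf + ν * μ) * ‖x - y‖ := by
  have hφeq : φ = fun x => f x + augLagrangianValue h lam ν (T x) := funext hφ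
  refine ConvexOn.norm_sub_le_of_convexOn_half_mul_norm_sq_sub ?_ ?_ hφ' x y
  · rw [hφeq]
    exact hfconv.add ((convexOn_augLagrangianValue hh hν).comp_linearMap T)
  · have hsum := ((convexOn_univ_half_mul_norm_sq_sub_of_lipschitz_gradient hf hlip).add
        ((convexOn_half_mul_norm_sq_sub_augLagrangianValue (lam := lam) hh hν).comp_linearMap
          T)).add
      ((convexOn_mul_norm_sq_sub_norm_sq_apply hT).smul (by positivity : 0 ≤ ν / 2))
    refine hsum.congr fun x _ => ?_
    simp only [hφ, Pi.add_apply, Function.comp_apply, smul_eq_mul]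
    ring

theorem statement2_general {n m : ℕ}
    (f : EuclideanSpace ℝ (Fin n) → ℝ)
    (f' : EuclideanSpace ℝ (Fin n) → EuclideanSpace ℝ (Fin n))
    (hfconv : ConvexOn ℝ Set.univ f)
    (hfdiff : ∀ x, HasGradientAt f (f' x) x)
    (Lf : ℝ)
    (hlip : ∀ x y, ‖f' x - f' y‖ ≤ Lf * ‖x - y‖)
    (h : EuclideanSpace ℝ (Fin m) → ℝ)
    (hhconv : ConvexOn ℝ Set.univ h)
    (A : Matrix (Fin m) (Fin n) ℝ)
    (ν : ℝ) (hν : 0 < ν)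
    (lam : EuclideanSpace ℝ (Fin m))
    -- `μ` is the largest eigenvalue of `AᵀA`
    (μ : ℝ)
    (hμmax : ∀ c : ℝ, Module.End.HasEigenvalue (Matrix.toEuclideanLin (Aᵀ * A)) c → c ≤ μ)
    -- `φ` is the function `φ₁`, with gradient `φ'`
    (φ : EuclideanSpace ℝ (Fin n) → ℝ)
    (hφ : ∀ x, φ x = f x + ⨅ y : EuclideanSpace ℝ (Fin m),
        (h y + ⟪lam, Matrix.toEuclideanLin A x - y⟫
          + ν / 2 * ‖Matrix.toEuclideanLin A x - y‖ ^ 2))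
    (φ' : EuclideanSpace ℝ (Fin n) → EuclideanSpace ℝ (Fin n))
    (hφ' : ∀ x, HasGradientAt φ (φ' x) x) :
    ∀ x₁ x₂, ‖φ' x₁ - φ' x₂‖ ≤ (Lf + ν * μ) * ‖x₁ - x₂‖ :=
  norm_sub_le_of_eq_add_augLagrangianValue hfconv hfdiff hlip hhconv hν
    (A.norm_toEuclideanLin_sq_le hμmax) hφ hφ'

/-- Let `f : ℝⁿ → ℝ` be convex differentiable with `∇f` Lipschitz with constant `L_f > 0`,
`h : ℝᵐ → ℝ` closed convex, `A ∈ ℝ^{m×n}`, `ν > 0`, `lam ∈ ℝᵐ`, and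
`φ₁(x) := f(x) + min_y { h(y) + ⟨lam, Ax − y⟩ + (ν/2)‖Ax − y‖² }`.
Then `∇φ₁` is Lipschitz with constant `L_f + ν·λ_max(AᵀA)`.
Here `μ = λ_max(AᵀA)` is encoded as an eigenvalue of `AᵀA` dominating all
(real) eigenvalues, and `φ'` is the gradient of `φ₁`. -/
theorem statement2 {n m : ℕ}
    (f : EuclideanSpace ℝ (Fin n) → ℝ)
    (f' : EuclideanSpace ℝ (Fin n) → EuclideanSpace ℝ (Fin n))
    (hfconv : ConvexOn ℝ Set.univ f)
    (hfdiff : ∀ x, HasGradientAt f (f' x) x)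
    (Lf : ℝ) (hLf : 0 < Lf)
    (hlip : ∀ x y, ‖f' x - f' y‖ ≤ Lf * ‖x - y‖)
    (h : EuclideanSpace ℝ (Fin m) → ℝ)
    (hhconv : ConvexOn ℝ Set.univ h)
    (hhclosed : ∀ α : ℝ, IsClosed {y | h y ≤ α})
    (A : Matrix (Fin m) (Fin n) ℝ)
    (ν : ℝ) (hν : 0 < ν)
    (lam : EuclideanSpace ℝ (Fin m))
    -- `μ` is the largest eigenvalue of `AᵀA`
    (μ : ℝ)
    (hμ : Module.End.HasEigenvalue (Matrix.toEuclideanLin (Aᵀ * A)) μ)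
    (hμmax : ∀ c : ℝ, Module.End.HasEigenvalue (Matrix.toEuclideanLin (Aᵀ * A)) c → c ≤ μ)
    -- `φ` is the function `φ₁`, with gradient `φ'`
    (φ : EuclideanSpace ℝ (Fin n) → ℝ)
    (hφ : ∀ x, φ x = f x + ⨅ y : EuclideanSpace ℝ (Fin m),
        (h y + ⟪lam, Matrix.toEuclideanLin A x - y⟫
          + ν / 2 * ‖Matrix.toEuclideanLin A x - y‖ ^ 2))
    (φ' : EuclideanSpace ℝ (Fin n) → EuclideanSpace ℝ (Fin n))
    (hφ' : ∀ x, HasGradientAt φ (φ' x) x) :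
    ∀ x₁ x₂, ‖φ' x₁ - φ' x₂‖ ≤ (Lf + ν * μ) * ‖x₁ - x₂‖ :=
  statement2_general f f' hfconv hfdiff Lf hlip h hhconv A ν hν lam μ hμmax φ hφ φ' hφ'
end
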